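/- arXiv:math/0507467 — 2 statements merged into one kernel-verified Lean document; each statement's English description precedes it below -/
import Mathlib

section
/- Let D ⊂ ℂⁿ, D ≠ ℂⁿ, be a balanced domain (i.e., λz ∈ D whenever z ∈ D and |λ| ≤ 1) which is an L²_h-domain of holomorphy. Then L²_h(D) is infinite-dimensional. -/
open MeasureTheory Filter Metric Set

/-- `elog x` is `log x` with value `-∞` for `x ≤ 0`, as an extended real. -/
noncomputable def elog (x : ℝ) : EReal := if x ≤ 0 then ⊥ else ((Real.log x : ℝ) : EReal)

/-- The sub-mean value inequality over circles of closed discs contained in `Ω`, phrased via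
continuous real-valued majorants of the (extended-real-valued) function on the circle. -/
def SubmeanOn (u : ℂ → EReal) (Ω : Set ℂ) : Prop :=
  ∀ c : ℂ, ∀ r : ℝ, 0 < r → Metric.closedBall c r ⊆ Ω →
    ∀ φ : ℝ → ℝ, Continuous φ →
      (∀ θ : ℝ, u (c + r * Complex.exp (θ * Complex.I)) ≤ ((φ θ : ℝ) : EReal)) →
      u c ≤ (((2 * Real.pi)⁻¹ * ∫ θ in (0:ℝ)..(2 * Real.pi), φ θ : ℝ) : EReal)

/-- `u : Ω → [-∞, ∞)` is subharmonic on the open set `Ω ⊆ ℂ`: upper semicontinuous,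
nowhere `+∞`, not identically `-∞` on any connected component, sub-mean value inequality. -/
def SubharmonicOn (u : ℂ → EReal) (Ω : Set ℂ) : Prop :=
  IsOpen Ω ∧ UpperSemicontinuousOn u Ω ∧
  (∀ z ∈ Ω, u z ≠ ⊤) ∧
  (∀ z ∈ Ω, ∃ w ∈ connectedComponentIn Ω z, u w ≠ ⊥) ∧
  SubmeanOn u Ω

/-- A set `E ⊆ ℂ` is polar if some subharmonic function on an open set containing `E`
equals `-∞` on `E`. -/
def PolarSet (E : Set ℂ) : Prop :=
  ∃ Ω : Set ℂ, E ⊆ Ω ∧ ∃ u : ℂ → EReal, SubharmonicOn u Ω ∧ ∀ z ∈ E, u z = ⊥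

/-- The space of square-integrable holomorphic functions on `D`. -/
def L2h {E : Type*} [NormedAddCommGroup E] [NormedSpace ℂ E] [MeasureSpace E]
    (D : Set E) : Set (E → ℂ) :=
  {f | DifferentiableOn ℂ f D ∧ IntegrableOn (fun z => ‖f z‖ ^ 2) D volume}

/-- `D` is an `L²ₕ`-domain of holomorphy. -/
def IsL2hDomainOfHolomorphy {E : Type*} [NormedAddCommGroup E] [NormedSpace ℂ E]
    [MeasureSpace E] (D : Set E) : Prop :=
  ¬ ∃ D₀ D₁ : Set E, IsOpen D₀ ∧ IsConnected D₀ ∧ IsOpen D₁ ∧ IsConnected D₁ ∧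
      D₀ ⊆ D₁ ∩ D ∧ ¬ (D₁ ⊆ D) ∧
      ∀ f ∈ L2h D, ∃ g : E → ℂ, DifferentiableOn ℂ g D₁ ∧ Set.EqOn g f D₀

/-- The Hartogs domain `G_{D,ρ} = {(z₁,z₂) : z₁ ∈ D, |z₂| < e^{-ρ(z₁)}}`. -/
def hartogs (D : Set ℂ) (ρ : ℂ → EReal) : Set (ℂ × ℂ) :=
  {p | p.1 ∈ D ∧ elog ‖p.2‖ < - ρ p.1}

/-- `S(D)`: boundary points near which the complement of `D` is polar. -/
def polarS (D : Set ℂ) : Set ℂ :=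
  {z ∈ frontier D | ∃ U : Set ℂ, IsOpen U ∧ z ∈ U ∧ PolarSet (U \ D)}

/-- `fj` is the family of coefficients of a Hartogs expansion of `f` on `G_{D,ρ}`. -/
def HartogsExpansion (D : Set ℂ) (ρ : ℂ → EReal) (f : ℂ × ℂ → ℂ) (fj : ℕ → ℂ → ℂ) : Prop :=
  (∀ j, DifferentiableOn ℂ (fj j) D) ∧
  ∀ p ∈ hartogs D ρ, HasSum (fun j => fj j p.1 * p.2 ^ j) (f p)

/-- `ρ_f(z) = limsup_j (1/j) log |f_j(z)|` for coefficients `fj`. -/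
noncomputable def coeffGrowth (fj : ℕ → ℂ → ℂ) (z : ℂ) : EReal :=
  Filter.limsup (fun (j : ℕ) => ((((j : ℝ)⁻¹ : ℝ)) : EReal) * elog ‖fj j z‖) Filter.atTop

/-- The upper semicontinuous regularization `g*`. -/
noncomputable def uscReg (g : ℂ → EReal) (z : ℂ) : EReal := Filter.limsup g (nhds z)

/-- `ρ̃ = sup_{f ∈ L²ₕ(G_{D,ρ})} (ρ_f)*`. -/
noncomputable def rhoTilde (D : Set ℂ) (ρ : ℂ → EReal) (z : ℂ) : EReal :=
  ⨆ fj ∈ {fj : ℕ → ℂ → ℂ | ∃ f ∈ L2h (hartogs D ρ), HartogsExpansion D ρ f fj},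
    uscReg (coeffGrowth fj) z

/-- `D̂ = D ∪ {z ∈ S(D) : limsup_{D ∋ w → z} ρ(w) < ∞}`. -/
def DHat (D : Set ℂ) (ρ : ℂ → EReal) : Set ℂ :=
  D ∪ {z ∈ polarS D | Filter.limsup ρ (nhdsWithin z D) < ⊤}

open Classical in
/-- `ρ̂`, extending `ρ` to `D̂` by boundary limsups. -/
noncomputable def rhoHat (D : Set ℂ) (ρ : ℂ → EReal) (z : ℂ) : EReal :=
  if z ∈ D then ρ z else Filter.limsup ρ (nhdsWithin z D)

/-- `u` is plurisubharmonic on an open `Ω ⊆ ℂⁿ`. -/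
def PlurisubharmonicOn {n : ℕ} (u : (Fin n → ℂ) → EReal) (Ω : Set (Fin n → ℂ)) : Prop :=
  IsOpen Ω ∧ UpperSemicontinuousOn u Ω ∧
  (∀ z ∈ Ω, u z ≠ ⊤) ∧
  (∀ z ∈ Ω, ∃ w ∈ connectedComponentIn Ω z, u w ≠ ⊥) ∧
  ∀ a b : Fin n → ℂ, SubmeanOn (fun lam => u (a + lam • b)) {lam : ℂ | a + lam • b ∈ Ω}

/-- A set `E ⊆ ℂⁿ` is pluripolar. -/
def PluripolarSet {n : ℕ} (E : Set (Fin n → ℂ)) : Prop :=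
  ∃ Ω : Set (Fin n → ℂ), E ⊆ Ω ∧
    ∃ u : (Fin n → ℂ) → EReal, PlurisubharmonicOn u Ω ∧ ∀ z ∈ E, u z = ⊥

/-- `D ⊆ ℂⁿ` is pseudoconvex: it admits a plurisubharmonic exhaustion function. -/
def IsPseudoconvex {n : ℕ} (D : Set (Fin n → ℂ)) : Prop :=
  ∃ u : (Fin n → ℂ) → EReal, PlurisubharmonicOn u D ∧
    ∀ c : ℝ, IsCompact {z | z ∈ D ∧ u z ≤ (c : EReal)}

/-- `L²ₕ(D)` is infinite dimensional: arbitrarily many elements that are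
linearly independent as functions on `D`. -/
def L2hInfiniteDim {E : Type*} [NormedAddCommGroup E] [NormedSpace ℂ E] [MeasureSpace E]
    (D : Set E) : Prop :=
  ∀ N : ℕ, ∃ fs : Fin N → E → ℂ, (∀ i, fs i ∈ L2h D) ∧
    ∀ c : Fin N → ℂ, (∀ z ∈ D, ∑ i, c i * fs i z = 0) → c = 0

/-! ### Auxiliary material for the proof -/

/-- Identity principle for complex-differentiable functions on a connected open subset of `ℂⁿ`,
proved via one-variable analyticity along complex lines. -/
theorem eqOn_of_eqOn_open {n : ℕ} {Ω U : Set (Fin n → ℂ)} {F G : (Fin n → ℂ) → ℂ}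
    (hΩ : IsOpen Ω) (hconn : IsPreconnected Ω) (hU : IsOpen U) (hUne : U.Nonempty)
    (hUΩ : U ⊆ Ω) (hF : DifferentiableOn ℂ F Ω) (hG : DifferentiableOn ℂ G Ω)
    (heq : Set.EqOn F G U) : Set.EqOn F G Ω := by
  set u : Set (Fin n → ℂ) := Ω ∩ {z | ∀ᶠ w in nhds z, F w = G w} with hu_def
  have huo : IsOpen u := hΩ.inter isOpen_setOf_eventually_nhds
  have hne : (Ω ∩ u).Nonempty := by
    obtain ⟨x, hx⟩ := hUne
    exact ⟨x, hUΩ hx, hUΩ hx, Filter.eventually_of_mem (hU.mem_nhds hx) fun w hw => heq hw⟩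
  have hcl : closure u ∩ Ω ⊆ u := by
    rintro z ⟨hzc, hzΩ⟩
    obtain ⟨r, hr0, hball⟩ := Metric.isOpen_iff.1 hΩ z hzΩ
    obtain ⟨z', hz'u, hz'd⟩ := Metric.mem_closure_iff.1 hzc (r / 2) (by linarith)
    have hz'ball : z' ∈ Metric.ball z r := by
      rw [Metric.mem_ball, dist_comm]; linarith
    have key : ∀ w ∈ Metric.ball z r, F w = G w := by
      intro w hw
      set L : ℂ → (Fin n → ℂ) := fun lam => z' + lam • (w - z') with hL
      have hLdiff : Differentiable ℂ L := by
        apply Differentiable.const_add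
        exact differentiable_id.smul_const (w - z')
      have hLcont : Continuous L := hLdiff.continuous
      set Lam : Set ℂ := L ⁻¹' Metric.ball z r with hLam
      have hLamo : IsOpen Lam := Metric.isOpen_ball.preimage hLcont
      have hLamconv : Convex ℝ Lam := by
        intro a ha b hb s t hs ht hst
        have hcomb : L (s • a + t • b) = s • L a + t • L b := by
          have e1 : ∀ (r : ℝ) (x : Fin n → ℂ), r • x = (r : ℂ) • x := fun r x => by
            funext i; simp [Pi.smul_apply, Complex.real_smul]
          have hstC : (s : ℂ) + (t : ℂ) = 1 := by
            exact_mod_cast congrArg (Complex.ofReal) hst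
          simp only [hL, e1, Complex.real_smul]
          rw [show z' + ((s : ℂ) * a + (t : ℂ) * b) • (w - z')
              = ((s : ℂ) + (t : ℂ)) • z' + ((s : ℂ) * a + (t : ℂ) * b) • (w - z') by
            rw [hstC, one_smul]]
          module
        show L (s • a + t • b) ∈ Metric.ball z r
        rw [hcomb]
        exact convex_ball z r ha hb hs ht hst
      have h0Lam : (0 : ℂ) ∈ Lam := by
        show L 0 ∈ Metric.ball z r
        simpa [hL] using hz'ball
      have h1Lam : (1 : ℂ) ∈ Lam := by
        show L 1 ∈ Metric.ball z r
        simpa [hL] using hw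
      have hmaps : Set.MapsTo L Lam Ω := fun lam hlam => hball hlam
      have hFL : DifferentiableOn ℂ (fun lam => F (L lam) - G (L lam)) Lam :=
        (hF.comp hLdiff.differentiableOn hmaps).sub (hG.comp hLdiff.differentiableOn hmaps)
      have hana := hFL.analyticOnNhd hLamo
      have hev : (fun lam => F (L lam) - G (L lam)) =ᶠ[nhds (0 : ℂ)] 0 := by
        have htend : Filter.Tendsto L (nhds 0) (nhds z') := by
          have := hLcont.continuousAt (x := (0 : ℂ))
          simpa [hL, ContinuousAt] using this
        filter_upwards [htend.eventually hz'u.2] with lam hlam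
        simp [hlam]
      have hzero := hana.eqOn_zero_of_preconnected_of_eventuallyEq_zero
        hLamconv.isPreconnected h0Lam hev
      have h1 := hzero h1Lam
      have hfg1 : F (L 1) = G (L 1) := by
        have h1' : F (L 1) - G (L 1) = 0 := by simpa using h1
        exact sub_eq_zero.mp h1'
      have hL1 : L 1 = w := by simp [hL]
      rwa [hL1] at hfg1
    exact ⟨hzΩ, Filter.eventually_of_mem (Metric.ball_mem_nhds z hr0) key⟩
  have hsub : Ω ⊆ u := hconn.subset_of_closure_inter_subset huo hne hcl
  exact fun z hz => ((hsub hz).2).self_of_nhds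

/-- Scaled dilations of an `L²ₕ` function are again in `L²ₕ` on a balanced domain. -/
theorem mem_L2h_comp_smul {n : ℕ} {D : Set (Fin n → ℂ)} (hDopen : IsOpen D)
    (hbal : ∀ z ∈ D, ∀ lam : ℂ, ‖lam‖ ≤ 1 → lam • z ∈ D)
    {f : (Fin n → ℂ) → ℂ} (hf : f ∈ L2h D) {t : ℝ} (ht0 : 0 < t) (ht1 : t ≤ 1) :
    (fun z => f ((t : ℂ) • z)) ∈ L2h D := by
  have e1 : ∀ x : Fin n → ℂ, (t : ℂ) • x = t • x := fun x => by
    funext i; simp [Pi.smul_apply, Complex.real_smul]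
  have hmaps : Set.MapsTo (fun z : Fin n → ℂ => (t : ℂ) • z) D D := fun z hz =>
    hbal z hz _ (by rw [Complex.norm_real, Real.norm_eq_abs, abs_of_pos ht0]; exact ht1)
  constructor
  · exact hf.1.comp ((differentiable_id.const_smul ((t : ℂ))).differentiableOn) hmaps
  · have hind : Integrable (D.indicator fun w => ‖f w‖ ^ 2) volume :=
      (integrable_indicator_iff hDopen.measurableSet).2 hf.2
    have h2 : Integrable (fun z : Fin n → ℂ => D.indicator (fun w => ‖f w‖ ^ 2) (t • z))
        volume := hind.comp_smul ht0.ne'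
    refine (h2.integrableOn (s := D)).congr_fun ?_ hDopen.measurableSet
    intro z hz
    have hmem : (t : ℝ) • z ∈ D := by rw [← e1]; exact hmaps hz
    simp only [Set.indicator_of_mem hmem]
    rw [← e1]

/-- The sequence of iterated extensions built from a linear relation among dilates. -/
noncomputable def extSeq {n : ℕ} {ι : Type*} (s : Finset ι) (b : ι → ℂ) (v : ι → ℝ)
    (f₀ : (Fin n → ℂ) → ℂ) : ℕ → (Fin n → ℂ) → ℂ
  | 0 => f₀
  | (k+1) => fun w => ∑ i ∈ s, b i * extSeq s b v f₀ k ((v i : ℂ) • w)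
/-- A balanced `L²ₕ`-domain of holomorphy `D ⊊ ℂⁿ` has infinite
dimensional Bergman space `L²ₕ(D)`. -/
theorem balanced_infinite_dim (n : ℕ) (D : Set (Fin n → ℂ)) (hDopen : IsOpen D)
    (hDconn : IsConnected D) (hDne : D ≠ Set.univ)
    (hbal : ∀ z ∈ D, ∀ lam : ℂ, ‖lam‖ ≤ 1 → lam • z ∈ D)
    (hdoh : IsL2hDomainOfHolomorphy D) :
    L2hInfiniteDim D := by
  classical
  intro N
  obtain ⟨z₀, hz₀⟩ := hDconn.nonempty
  have h0D : (0 : Fin n → ℂ) ∈ D := by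
    have := hbal z₀ hz₀ 0 (by simp)
    simpa using this
  -- helper facts
  have hsmul : ∀ (a c : ℝ) (w : Fin n → ℂ), (a : ℂ) • (c : ℂ) • w = ((a * c : ℝ) : ℂ) • w :=
    fun a c w => by rw [smul_smul, ← Complex.ofReal_mul]
  have hnorm : ∀ r : ℝ, 0 ≤ r → r ≤ 1 → ‖(r : ℂ)‖ ≤ 1 := fun r h0 h1 => by
    rw [Complex.norm_real, Real.norm_eq_abs, abs_of_nonneg h0]; exact h1
  -- there is a function in L²ₕ(D) with no entire extension
  have hex : ∃ f₀ ∈ L2h D,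
      ¬∃ g : (Fin n → ℂ) → ℂ, DifferentiableOn ℂ g Set.univ ∧ Set.EqOn g f₀ D := by
    by_contra hcon
    push_neg at hcon
    refine hdoh ⟨D, Set.univ, hDopen, hDconn, isOpen_univ,
      ⟨⟨0, Set.mem_univ 0⟩, (convex_univ (𝕜 := ℝ) (E := Fin n → ℂ)).isPreconnected⟩,
      fun x hx => ⟨Set.mem_univ x, hx⟩,
      fun h => hDne (Set.univ_subset_iff.1 h), ?_⟩
    intro f hf
    obtain ⟨g, hg1, hg2⟩ := hcon f hf
    exact ⟨g, hg1, hg2⟩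
  obtain ⟨f₀, hf₀, hf₀ext⟩ := hex
  -- the dilates
  set t : Fin N → ℝ := fun i => (2 : ℝ)⁻¹ ^ ((i : ℕ) + 1) with ht_def
  have ht0 : ∀ i, 0 < t i := fun i => pow_pos (by norm_num) _
  have ht1 : ∀ i, t i ≤ 1 := fun i => by
    apply pow_le_one₀ <;> norm_num
  have hmemL : ∀ i : Fin N, (fun z => f₀ ((t i : ℂ) • z)) ∈ L2h D := fun i =>
    mem_L2h_comp_smul hDopen hbal hf₀ (ht0 i) (ht1 i)
  by_cases hind : ∀ c : Fin N → ℂ, (∀ z ∈ D, ∑ i, c i * f₀ ((t i : ℂ) • z) = 0) → c = 0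
  · exact ⟨fun i z => f₀ ((t i : ℂ) • z), hmemL, hind⟩
  exfalso
  push_neg at hind
  obtain ⟨c, hrel, hc⟩ := hind
  -- the minimal index with nonzero coefficient
  have hSne : (Finset.univ.filter fun i => c i ≠ 0).Nonempty := by
    obtain ⟨i, hi⟩ := Function.ne_iff.1 hc
    exact ⟨i, Finset.mem_filter.2 ⟨Finset.mem_univ _, hi⟩⟩
  set j := (Finset.univ.filter fun i => c i ≠ 0).min' hSne with hj_def
  have hcj : c j ≠ 0 :=
    (Finset.mem_filter.1 ((Finset.univ.filter fun i => c i ≠ 0).min'_mem hSne)).2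
  have hjle : ∀ i : Fin N, c i ≠ 0 → j ≤ i := by
    intro i hi
    rw [hj_def]
    exact Finset.min'_le _ i (Finset.mem_filter.2 ⟨Finset.mem_univ _, hi⟩)
  set I := Finset.univ.filter fun i => j < i with hI_def
  set b : Fin N → ℂ := fun i => -(c i / c j) with hb_def
  set v : Fin N → ℝ := fun i => t i / t j with hv_def
  have hv0 : ∀ i, 0 < v i := fun i => div_pos (ht0 i) (ht0 j)
  have hv2 : ∀ i ∈ I, 2 * v i ≤ 1 := by
    intro i hi
    have hij : (j : ℕ) < (i : ℕ) := by
      have := (Finset.mem_filter.1 hi).2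
      exact Fin.lt_iff_val_lt_val.1 this
    have hvi : v i = (2 : ℝ)⁻¹ ^ ((i : ℕ) - (j : ℕ)) := by
      rw [hv_def]
      simp only [ht_def]
      rw [div_eq_iff (by positivity : ((2:ℝ)⁻¹ ^ ((j:ℕ)+1)) ≠ 0), ← pow_add]
      congr 1
      omega
    have h1le : 1 ≤ (i : ℕ) - (j : ℕ) := by omega
    have : (2 : ℝ)⁻¹ ^ ((i : ℕ) - (j : ℕ)) ≤ (2 : ℝ)⁻¹ ^ 1 :=
      pow_le_pow_of_le_one (by norm_num) (by norm_num) h1le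
    rw [hvi]
    nlinarith [this]
  -- the functional equation
  have feq : ∀ z ∈ D, f₀ ((t j : ℂ) • z) = ∑ i ∈ I, b i * f₀ ((t i : ℂ) • z) := by
    intro z hz
    have h0 := hrel z hz
    have hjI : j ∉ I := by simp [hI_def]
    have hsum : ∑ i ∈ insert j I, c i * f₀ ((t i : ℂ) • z)
        = ∑ i, c i * f₀ ((t i : ℂ) • z) := by
      apply Finset.sum_subset (Finset.subset_univ _)
      intro i _ hiI
      have hij : ¬(i = j ∨ j < i) := by simpa [Finset.mem_insert, hI_def] using hiI
      push_neg at hij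
      have hci : c i = 0 := by
        by_contra hne
        have hji := hjle i hne
        have hlt : j < i := lt_of_le_of_ne hji fun hji' => hij.1 hji'.symm
        exact absurd hlt (by simpa using hij.2)
      simp [hci]
    rw [Finset.sum_insert hjI] at hsum
    have key : c j * f₀ ((t j : ℂ) • z) = ∑ i ∈ I, -c i * f₀ ((t i : ℂ) • z) := by
      have hadd : c j * f₀ ((t j : ℂ) • z) + ∑ i ∈ I, c i * f₀ ((t i : ℂ) • z) = 0 := by
        rw [hsum]; exact h0
      have := eq_neg_of_add_eq_zero_left hadd
      rw [this, ← Finset.sum_neg_distrib]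
      apply Finset.sum_congr rfl
      intro i _
      ring
    have hdiv := congrArg (fun x => (c j)⁻¹ * x) key
    rw [← mul_assoc, inv_mul_cancel₀ hcj, one_mul, Finset.mul_sum] at hdiv
    rw [hdiv]
    apply Finset.sum_congr rfl
    intro i _
    simp only [hb_def]
    rw [div_eq_mul_inv]
    ring
  -- the extension sequence and domains
  set g : ℕ → (Fin n → ℂ) → ℂ := extSeq I b v f₀ with hg_def
  set DD : ℕ → Set (Fin n → ℂ) := fun k => {w | (((2 : ℝ)⁻¹ ^ k : ℝ) : ℂ) • w ∈ D} with hDD_def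
  have hDD0 : DD 0 = D := by
    ext w
    simp [hDD_def]
  have hDDopen : ∀ k, IsOpen (DD k) := fun k =>
    hDopen.preimage (continuous_const_smul _)
  have h0DD : ∀ k, (0 : Fin n → ℂ) ∈ DD k := fun k => by
    show (((2 : ℝ)⁻¹ ^ k : ℝ) : ℂ) • (0 : Fin n → ℂ) ∈ D
    rw [smul_zero]; exact h0D
  have hDDconn : ∀ k, IsPreconnected (DD k) := by
    intro k
    have himage : DD k = (fun z : Fin n → ℂ => (((2 : ℝ) ^ k : ℝ) : ℂ) • z) '' D := by
      ext w
      constructor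
      · intro hw
        refine ⟨(((2 : ℝ)⁻¹ ^ k : ℝ) : ℂ) • w, hw, ?_⟩
        show (((2 : ℝ) ^ k : ℝ) : ℂ) • (((2 : ℝ)⁻¹ ^ k : ℝ) : ℂ) • w = w
        rw [hsmul]
        rw [show (2 : ℝ) ^ k * (2 : ℝ)⁻¹ ^ k = 1 by
          rw [← mul_pow]; norm_num]
        simp
      · rintro ⟨z, hz, rfl⟩
        show (((2 : ℝ)⁻¹ ^ k : ℝ) : ℂ) • (((2 : ℝ) ^ k : ℝ) : ℂ) • z ∈ D
        rw [hsmul]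
        rw [show (2 : ℝ)⁻¹ ^ k * (2 : ℝ) ^ k = 1 by
          rw [← mul_pow]; norm_num]
        simpa using hz
    rw [himage]
    exact hDconn.isPreconnected.image _ (continuous_const_smul _).continuousOn
  have hmonoDD : ∀ k, DD k ⊆ DD (k + 1) := by
    intro k w hw
    show (((2 : ℝ)⁻¹ ^ (k + 1) : ℝ) : ℂ) • w ∈ D
    have harith : ((2 : ℝ)⁻¹ ^ (k + 1) : ℝ) = (2 : ℝ)⁻¹ * (2 : ℝ)⁻¹ ^ k := by
      rw [pow_succ]; ring
    rw [harith, ← hsmul]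
    exact hbal _ hw _ (hnorm _ (by norm_num) (by norm_num))
  have hDDle : ∀ k m, k ≤ m → DD k ⊆ DD m := by
    intro k m hkm
    induction m, hkm using Nat.le_induction with
    | base => exact fun _ h => h
    | succ m hkm ih => exact fun w hw => hmonoDD m (ih hw)
  -- step membership
  have hstep : ∀ k, ∀ i ∈ I, ∀ w ∈ DD (k + 1), ((v i : ℝ) : ℂ) • w ∈ DD k := by
    intro k i hi w hw
    show (((2 : ℝ)⁻¹ ^ k : ℝ) : ℂ) • ((v i : ℝ) : ℂ) • w ∈ D
    rw [hsmul]
    have harith : (2 : ℝ)⁻¹ ^ k * v i = (2 * v i) * ((2 : ℝ)⁻¹ ^ (k + 1)) := by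
      rw [pow_succ]; ring
    rw [harith, ← hsmul]
    exact hbal _ hw _ (hnorm _ (by nlinarith [hv0 i]) (hv2 i hi))
  -- unfolding lemmas for g
  have hg0 : g 0 = f₀ := rfl
  have hgsucc : ∀ k, g (k + 1) = fun w => ∑ i ∈ I, b i * g k (((v i : ℝ) : ℂ) • w) :=
    fun k => rfl
  -- differentiability
  have hdiff : ∀ k, DifferentiableOn ℂ (g k) (DD k) := by
    intro k
    induction k with
    | zero => rw [hg0, hDD0]; exact hf₀.1
    | succ k ih =>
      rw [hgsucc k]
      apply DifferentiableOn.fun_sum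
      intro i hi
      have hcomp : DifferentiableOn ℂ (fun w => g k (((v i : ℝ) : ℂ) • w)) (DD (k + 1)) :=
        ih.comp ((differentiable_id.const_smul (((v i : ℝ) : ℂ))).differentiableOn)
          (fun w hw => hstep k i hi w hw)
      exact hcomp.const_mul (b i)
  -- base case equality on D
  have hbase : Set.EqOn (g 1) (g 0) (DD 0) := by
    rw [hDD0]
    set U0 : Set (Fin n → ℂ) := {w | (((t j)⁻¹ : ℝ) : ℂ) • w ∈ D} with hU0_def
    have hU0open : IsOpen U0 := hDopen.preimage (continuous_const_smul _)
    have hU0ne : U0.Nonempty := ⟨0, by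
      show ((((t j)⁻¹ : ℝ)) : ℂ) • (0 : Fin n → ℂ) ∈ D
      rw [smul_zero]; exact h0D⟩
    have hU0D : U0 ⊆ D := by
      intro w hw
      have hww : w = ((t j : ℝ) : ℂ) • ((((t j)⁻¹ : ℝ)) : ℂ) • w := by
        rw [hsmul, mul_inv_cancel₀ (ht0 j).ne']
        simp
      rw [hww]
      exact hbal _ hw _ (hnorm _ (ht0 j).le (ht1 j))
    apply eqOn_of_eqOn_open hDopen hDconn.isPreconnected hU0open hU0ne hU0D
    · exact (hdiff 1).mono (hDD0 ▸ hmonoDD 0)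
    · rw [hg0]; exact hf₀.1
    · intro w hw
      have hz : ((((t j)⁻¹ : ℝ)) : ℂ) • w ∈ D := hw
      have := feq _ hz
      rw [hgsucc 0, hg0]
      have e2 : ((t j : ℝ) : ℂ) • ((((t j)⁻¹ : ℝ)) : ℂ) • w = w := by
        rw [hsmul, mul_inv_cancel₀ (ht0 j).ne']
        simp
      have e3 : ∀ i : Fin N, ((t i : ℝ) : ℂ) • ((((t j)⁻¹ : ℝ)) : ℂ) • w
          = ((v i : ℝ) : ℂ) • w := by
        intro i
        rw [hsmul]
        simp only [hv_def]
        rw [div_eq_mul_inv]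
      rw [e2] at this
      simp only [e3] at this
      exact this.symm
  -- inductive equality
  have hEk : ∀ k, Set.EqOn (g (k + 1)) (g k) (DD k) := by
    intro k
    induction k with
    | zero => exact hbase
    | succ k ih =>
      intro w hw
      show (∑ i ∈ I, b i * g (k + 1) (((v i : ℝ) : ℂ) • w))
          = ∑ i ∈ I, b i * g k (((v i : ℝ) : ℂ) • w)
      apply Finset.sum_congr rfl
      intro i hi
      rw [ih (hstep k i hi w hw)]
  have hchain : ∀ k m, k ≤ m → Set.EqOn (g m) (g k) (DD k) := by
    intro k m hkm
    induction m, hkm using Nat.le_induction with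
    | base => exact fun w _ => rfl
    | succ m hkm ih =>
      intro w hw
      rw [hEk m (hDDle k m hkm hw), ih hw]
  -- every point is in some DD k
  have hexk : ∀ w : Fin n → ℂ, ∃ k, w ∈ DD k := by
    intro w
    obtain ⟨ε, hε, hball⟩ := Metric.isOpen_iff.1 hDopen 0 h0D
    obtain ⟨k, hk⟩ := exists_pow_lt_of_lt_one
      (show (0 : ℝ) < ε / (‖w‖ + 1) by positivity) (show (2 : ℝ)⁻¹ < 1 by norm_num)
    refine ⟨k, hball ?_⟩
    rw [Metric.mem_ball, dist_zero_right, norm_smul, Complex.norm_real, Real.norm_eq_abs,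
      abs_of_pos (pow_pos (by norm_num : (0:ℝ) < 2⁻¹) k)]
    have h1 : (2 : ℝ)⁻¹ ^ k * (‖w‖ + 1) < ε := by
      have := (lt_div_iff₀ (by positivity : (0:ℝ) < ‖w‖ + 1)).1 hk
      linarith
    nlinarith [norm_nonneg w, pow_pos (show (0:ℝ) < 2⁻¹ by norm_num) k]
  -- glue the extensions
  set G : (Fin n → ℂ) → ℂ := fun w => g (Nat.find (hexk w)) w with hG_def
  have hGk : ∀ k, Set.EqOn G (g k) (DD k) := by
    intro k w hw
    have h1 : w ∈ DD (Nat.find (hexk w)) := Nat.find_spec (hexk w)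
    have h2 : Nat.find (hexk w) ≤ k := Nat.find_min' (hexk w) hw
    exact (hchain (Nat.find (hexk w)) k h2 h1).symm
  have hGdiff : DifferentiableOn ℂ G Set.univ := by
    intro w _
    obtain ⟨k, hk⟩ := hexk w
    have hat : DifferentiableAt ℂ (g k) w :=
      (hdiff k).differentiableAt ((hDDopen k).mem_nhds hk)
    have hev : G =ᶠ[nhds w] g k :=
      Filter.eventuallyEq_of_mem ((hDDopen k).mem_nhds hk) (hGk k)
    exact (hat.congr_of_eventuallyEq hev).differentiableWithinAt
  refine hf₀ext ⟨G, hGdiff, ?_⟩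
  intro w hw
  have hw0 : w ∈ DD 0 := hDD0.symm ▸ hw
  rw [hGk 0 hw0, hg0]
end

section
/- Let D ⊂ ℂ be a domain, ρ : D → [-∞,∞) subharmonic, and let f be a holomorphic function on the Hartogs domain G_{D,ρ} with Hartogs expansion f(z₁,z₂) = Σ_{j≥0} f_j(z₁) z₂ʲ. Then limsup_{j→∞} (1/j) log|f_j(z₁)| ≤ ρ(z₁) for every z₁ ∈ D; consequently also the upper semicontinuous regularization of z₁ ↦ limsup_{j→∞} (1/j) log|f_j(z₁)| is ≤ ρ on D. -/
open MeasureTheory Filter Metric Set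

lemma elog_le_coe_of_le_exp {a b : ℝ} (h : a ≤ Real.exp b) : elog a ≤ (b : EReal) := by
  unfold elog
  split_ifs with h0
  · exact bot_le
  · exact_mod_cast (Real.log_le_iff_le_exp (lt_of_not_ge h0)).2 h

lemma limsup_term_le (g : ℕ → ℂ) (r : ℝ)
    (hs : Summable (fun j => g j * ((Real.exp (-r) : ℝ) : ℂ) ^ j)) :
    Filter.limsup (fun (j : ℕ) => ((((j : ℝ)⁻¹ : ℝ)) : EReal) * elog ‖g j‖) Filter.atTop
      ≤ (r : EReal) := by
  have htz := hs.tendsto_atTop_zero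
  have htz0 : Filter.Tendsto (fun j => ‖g j * ((Real.exp (-r) : ℝ) : ℂ) ^ j‖) atTop (nhds 0) := by
    simpa using htz.norm
  have hev : ∀ᶠ j in atTop, ‖g j * ((Real.exp (-r) : ℝ) : ℂ) ^ j‖ < 1 :=
    htz0.eventually_lt_const one_pos
  refine Filter.limsup_le_of_le (by isBoundedDefault) ?_
  filter_upwards [hev, Filter.eventually_ge_atTop 1] with j hj hj1
  have hjpos : (0:ℝ) < (j:ℝ)⁻¹ := by positivity
  have hnorm : ‖g j‖ ≤ Real.exp (r * j) := by
    rw [norm_mul, norm_pow, Complex.norm_real, Real.norm_eq_abs,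
      abs_of_pos (Real.exp_pos _), ← Real.exp_nat_mul] at hj
    have hexp : (j : ℝ) * (-r) = -(r * j) := by ring
    rw [hexp, Real.exp_neg, ← div_eq_mul_inv, div_lt_one (Real.exp_pos _)] at hj
    exact hj.le
  have helog : elog ‖g j‖ ≤ ((r * j : ℝ) : EReal) := elog_le_coe_of_le_exp hnorm
  have : ((((j : ℝ)⁻¹ : ℝ)) : EReal) * elog ‖g j‖
      ≤ ((((j : ℝ)⁻¹ : ℝ)) : EReal) * ((r * j : ℝ) : EReal) := by
    rcases eq_or_ne (elog ‖g j‖) ⊥ with hb | hb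
    · rw [hb, EReal.coe_mul_bot_of_pos hjpos]; exact bot_le
    · lift elog ‖g j‖ to ℝ using ⟨ne_top_of_le_ne_top (EReal.coe_ne_top _) helog, hb⟩ with x hx
      rw [← EReal.coe_mul, ← EReal.coe_mul, EReal.coe_le_coe_iff]
      exact mul_le_mul_of_nonneg_left (by exact_mod_cast helog) hjpos.le
  refine this.trans ?_
  rw [← EReal.coe_mul, EReal.coe_le_coe_iff]
  have hjne : (j : ℝ) ≠ 0 := by positivity
  field_simp
  exact le_rfl

lemma coeffGrowth_le_on (D : Set ℂ) (ρ : ℂ → EReal) (f : ℂ × ℂ → ℂ) (fj : ℕ → ℂ → ℂ)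
    (hexp : HartogsExpansion D ρ f fj) {z : ℂ} (hz : z ∈ D) :
    coeffGrowth fj z ≤ ρ z := by
  refine le_of_forall_gt_imp_ge_of_dense fun y hy => ?_
  induction y with
  | bot => exact absurd hy (by simp)
  | coe r =>
    have hmem : (z, ((Real.exp (-r) : ℝ) : ℂ)) ∈ hartogs D ρ := by
      refine ⟨hz, ?_⟩
      have : elog ‖((Real.exp (-r) : ℝ) : ℂ)‖ = ((-r : ℝ) : EReal) := by
        rw [Complex.norm_real, Real.norm_eq_abs, abs_of_pos (Real.exp_pos _)]
        unfold elog
        rw [if_neg (not_le.2 (Real.exp_pos _)), Real.log_exp]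
      rw [this]
      show ((-r : ℝ) : EReal) < -ρ z
      rw [EReal.coe_neg]
      exact EReal.neg_lt_neg_iff.2 hy
    have hs : Summable (fun j => fj j z * ((Real.exp (-r) : ℝ) : ℂ) ^ j) :=
      (hexp.2 _ hmem).summable
    exact limsup_term_le _ r hs
  | top => exact le_top

/-- For holomorphic `f` on `G_{D,ρ}` with Hartogs expansion coefficients
`fj`, `limsup_j (1/j) log|f_j(z₁)| ≤ ρ(z₁)` for all `z₁ ∈ D`, and consequently the
upper regularization of this `limsup` is also `≤ ρ` on `D`. -/
theorem coeff_growth_le (D : Set ℂ) (hDopen : IsOpen D) (hDconn : IsConnected D)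
    (ρ : ℂ → EReal) (hρ : SubharmonicOn ρ D)
    (f : ℂ × ℂ → ℂ) (hf : DifferentiableOn ℂ f (hartogs D ρ))
    (fj : ℕ → ℂ → ℂ) (hexp : HartogsExpansion D ρ f fj) :
    (∀ z ∈ D, coeffGrowth fj z ≤ ρ z) ∧ ∀ z ∈ D, uscReg (coeffGrowth fj) z ≤ ρ z := by
  have h1 : ∀ z ∈ D, coeffGrowth fj z ≤ ρ z := fun z hz => coeffGrowth_le_on D ρ f fj hexp hz
  refine ⟨h1, fun z hz => ?_⟩
  have hmem : D ∈ nhds z := hDopen.mem_nhds hz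
  have hle : uscReg (coeffGrowth fj) z ≤ Filter.limsup ρ (nhds z) := by
    refine Filter.limsup_le_limsup ?_ (by isBoundedDefault) (by isBoundedDefault)
    filter_upwards [hmem] with w hw using h1 w hw
  refine hle.trans ?_
  refine le_of_forall_gt_imp_ge_of_dense fun y hy => ?_
  have husc := hρ.2.1 z hz y hy
  have : ∀ᶠ w in nhds z, ρ w ≤ y := by
    have := husc.mono (fun w hw => hw)
    rw [nhdsWithin_eq_nhds.2 hmem] at husc
    filter_upwards [husc] with w hw using hw.le
  exact Filter.limsup_le_of_le (by isBoundedDefault) this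
end
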